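/- arXiv:2604.26064 — 10 statements merged into one kernel-verified Lean document; each statement's English description precedes it below -/
import Mathlib

section
/- Let {a_j} be a sequence of nonnegative reals in ℓ². Then the sequence {b_n} defined by b_n := (1/n) ∑_{j=1}^n a_j is also in ℓ², i.e., ∑ b_n² < ∞. -/
open Finset

lemma hardy_key (a b : ℕ → ℝ) (hb0 : b 0 = 0)
    (hab : ∀ n : ℕ, a (n+1) = ((n:ℝ)+1) * b (n+1) - n * b n) (N : ℕ) :
    ∑ n ∈ range (N+1), b n ^ 2 + N * b N ^ 2
      ≤ 2 * ∑ n ∈ range (N+1), a n * b n := by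
  induction N with
  | zero => simp [hb0]
  | succ N ih =>
    rw [Finset.sum_range_succ, Finset.sum_range_succ (fun n => a n * b n)]
    have h1 := hab N
    have hsq := sq_nonneg (b (N+1) - b N)
    have hN : (0:ℝ) ≤ N := Nat.cast_nonneg N
    rw [h1]
    push_cast
    nlinarith [ih, hsq, hN, mul_nonneg hN hsq]

theorem stmt2 (a : ℕ → ℝ) (ha : ∀ j, 0 ≤ a j)
    (h2 : Summable (fun j => a j ^ 2)) :
    Summable (fun n => ((∑ j ∈ Finset.Icc 1 n, a j) / n) ^ 2) := by
  set b : ℕ → ℝ := fun n => (∑ j ∈ Icc 1 n, a j) / n with hb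
  have hbnn : ∀ n, 0 ≤ b n := fun n =>
    div_nonneg (Finset.sum_nonneg fun j _ => ha j) (Nat.cast_nonneg n)
  have hb0 : b 0 = 0 := by simp [hb]
  have hA : ∀ n : ℕ, (n : ℝ) * b n = ∑ j ∈ Icc 1 n, a j := by
    intro n
    rcases Nat.eq_zero_or_pos n with h | h
    · simp [hb, h]
    · have : (n : ℝ) ≠ 0 := Nat.cast_ne_zero.mpr h.ne'
      simp only [b]
      field_simp
  have hab : ∀ n : ℕ, a (n+1) = ((n:ℝ)+1) * b (n+1) - n * b n := by
    intro n
    have h1 := hA (n+1)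
    have h2' := hA n
    have hs : ∑ j ∈ Icc 1 (n+1), a j = (∑ j ∈ Icc 1 n, a j) + a (n+1) :=
      Finset.sum_Icc_succ_top (Nat.one_le_iff_ne_zero.mpr (Nat.succ_ne_zero n)) a
    push_cast at h1 ⊢
    linarith [h1, h2', hs]
  have htsumnn : 0 ≤ ∑' j, a j ^ 2 := tsum_nonneg fun j => sq_nonneg (a j)
  apply summable_of_sum_range_le (c := 4 * ∑' j, a j ^ 2)
    (fun n => sq_nonneg (b n))
  intro N
  rcases Nat.eq_zero_or_pos N with rfl | hN
  · simp; linarith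
  obtain ⟨M, rfl⟩ := Nat.exists_eq_add_of_lt hN
  rw [zero_add]
  have hfold : ∑ n ∈ range (M+1), ((∑ j ∈ Icc 1 n, a j) / (n:ℝ)) ^ 2
      = ∑ n ∈ range (M+1), b n ^ 2 := rfl
  rw [hfold]
  set S := ∑ n ∈ range (M+1), b n ^ 2 with hS
  set T := ∑ n ∈ range (M+1), a n ^ 2 with hT
  have hSnn : 0 ≤ S := Finset.sum_nonneg fun n _ => sq_nonneg _
  have hTnn : 0 ≤ T := Finset.sum_nonneg fun n _ => sq_nonneg _
  have hkey : S ≤ 2 * ∑ n ∈ range (M+1), a n * b n := by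
    have := hardy_key a b hb0 hab M
    have hnn : (0:ℝ) ≤ M * b M ^ 2 := by positivity
    linarith
  have hcs : (∑ n ∈ range (M+1), a n * b n) ^ 2 ≤ T * S := by
    simpa [hT, hS] using Finset.sum_mul_sq_le_sq_mul_sq (range (M+1)) a b
  have habnn : 0 ≤ ∑ n ∈ range (M+1), a n * b n :=
    Finset.sum_nonneg fun n _ => mul_nonneg (ha n) (hbnn n)
  have hS4T : S ≤ 4 * T := by nlinarith
  have hTle : T ≤ ∑' j, a j ^ 2 := Summable.sum_le_tsum _ (fun i _ => sq_nonneg _) h2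
  linarith
end

section
/- Let {n_k} be a strictly increasing sequence of positive integers with n_{k+1}/n_k ≤ C₀, and let {t_n} be a weakness sequence with values in (0,1]. Suppose ∑_{k=1}^∞ (n_{k+1}-n_k)^{1/2} t_{n_k} / n_k = ∞. Then for every nonnegative sequence {a_j} ∈ ℓ², one has ∑_{k=1}^∞ (n_{k+1}-n_k)^{1/2} a_{n_k} (∑_{j=1}^{n_k} a_j) / n_k < ∞, and consequently liminf_{k→∞} (a_{n_k}/t_{n_k}) ∑_{j=1}^{n_k} a_j = 0. -/
open Finset Filter

theorem stmt4 (n : ℕ → ℕ) (C₀ : ℝ) (hmono : StrictMono n) (hpos : ∀ k, 0 < n k)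
    (hratio : ∀ k, (n (k + 1) : ℝ) / n k ≤ C₀)
    (t : ℕ → ℝ) (ht : ∀ m, t m ∈ Set.Ioc (0 : ℝ) 1)
    (hdiv : ¬ Summable (fun k => Real.sqrt ((n (k + 1) : ℝ) - n k) * t (n k) / n k))
    (a : ℕ → ℝ) (ha : ∀ j, 0 ≤ a j) (h2 : Summable (fun j => a j ^ 2)) :
    Summable (fun k =>
      Real.sqrt ((n (k + 1) : ℝ) - n k) * a (n k) * (∑ j ∈ Finset.Icc 1 (n k), a j) / n k)
    ∧ Filter.atTop.liminf
        (fun k => a (n k) / t (n k) * ∑ j ∈ Finset.Icc 1 (n k), a j) = 0 := by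
  -- notation
  set S : ℕ → ℝ := fun m => ∑ j ∈ Finset.Icc 1 m, a j with hS
  set b : ℕ → ℝ := fun m => S m / m with hb
  have hSnonneg : ∀ m, 0 ≤ S m := fun m => Finset.sum_nonneg fun j _ => ha j
  have hbnonneg : ∀ m, 0 ≤ b m := fun m => div_nonneg (hSnonneg m) (Nat.cast_nonneg m)
  have hSmono : ∀ {m j : ℕ}, m ≤ j → S m ≤ S j := by
    intro m j hmj
    exact Finset.sum_le_sum_of_subset_of_nonneg (Finset.Icc_subset_Icc_right hmj)
      (fun i _ _ => ha i)
  have A : ℝ := 0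
  have hA0 : (0:ℝ) ≤ ∑' j, a j ^ 2 := tsum_nonneg fun j => sq_nonneg _
  -- recurrence : a (N+1) = (N+1) * b (N+1) - N * b N
  have hrec : ∀ N : ℕ, a (N + 1) = (N + 1 : ℝ) * b (N + 1) - (N : ℝ) * b N := by
    intro N
    have h1 : ((N:ℝ) + 1) * b (N + 1) = S (N + 1) := by
      rw [hb]
      field_simp
      push_cast; ring
    have h2' : (N : ℝ) * b N = S N := by
      rcases Nat.eq_zero_or_pos N with h | h
      · subst h; simp [hb, hS]
      · rw [hb]; field_simp
    have h3 : S (N + 1) = S N + a (N + 1) := by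
      rw [hS]
      exact Finset.sum_Icc_succ_top (Nat.succ_le_succ (Nat.zero_le N)) a
    push_cast
    rw [h1, h2', h3]; ring
  -- Hardy telescoping
  have htel : ∀ N : ℕ, ∑ m ∈ Finset.Icc 1 N, (b m ^ 2 - 2 * a m * b m) ≤ -(N : ℝ) * b N ^ 2 := by
    intro N
    induction N with
    | zero => simp
    | succ N ih =>
      rw [Finset.sum_Icc_succ_top (Nat.succ_le_succ (Nat.zero_le N))]
      have hr := hrec N
      have h1 : b (N + 1) ^ 2 - 2 * a (N + 1) * b (N + 1) ≤
          -((N:ℝ) + 1) * b (N + 1) ^ 2 + (N : ℝ) * b N ^ 2 := by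
        rw [hr]
        nlinarith [sq_nonneg (b (N + 1) - b N), Nat.cast_nonneg (α := ℝ) N]
      push_cast
      nlinarith [ih]
  -- Hardy bound on partial sums of b^2
  have hardy : ∀ N : ℕ, ∑ m ∈ Finset.Icc 1 N, b m ^ 2 ≤ 4 * ∑' j, a j ^ 2 := by
    intro N
    set B := ∑ m ∈ Finset.Icc 1 N, b m ^ 2 with hBdef
    set P := ∑ m ∈ Finset.Icc 1 N, a m * b m with hPdef
    have hB0 : 0 ≤ B := Finset.sum_nonneg fun m _ => sq_nonneg _
    have hP0 : 0 ≤ P := Finset.sum_nonneg fun m _ => mul_nonneg (ha m) (hbnonneg m)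
    have hBP : B ≤ 2 * P := by
      have := htel N
      have h4 : -(N:ℝ) * b N ^ 2 ≤ 0 := by
        have : (0:ℝ) ≤ (N:ℝ) * b N ^ 2 := mul_nonneg (Nat.cast_nonneg N) (sq_nonneg _)
        linarith
      have h5 : ∑ m ∈ Finset.Icc 1 N, (b m ^ 2 - 2 * a m * b m) = B - 2 * P := by
        rw [hBdef, hPdef, Finset.mul_sum, ← Finset.sum_sub_distrib]
        apply Finset.sum_congr rfl
        intro m _; ring
      linarith [h5 ▸ (le_trans this h4)]
    have hCS : P ^ 2 ≤ (∑ m ∈ Finset.Icc 1 N, a m ^ 2) * B :=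
      Finset.sum_mul_sq_le_sq_mul_sq _ _ _
    have hAN : ∑ m ∈ Finset.Icc 1 N, a m ^ 2 ≤ ∑' j, a j ^ 2 :=
      Summable.sum_le_tsum _ (fun j _ => sq_nonneg _) h2
    have hCS2 : P ^ 2 ≤ (∑' j, a j ^ 2) * B :=
      le_trans hCS (mul_le_mul_of_nonneg_right hAN hB0)
    nlinarith [hCS2, hBP, hB0, hP0, hA0]
  -- summability of b^2
  have hbsum : Summable (fun m => b m ^ 2) := by
    apply summable_of_sum_range_le (c := 4 * ∑' j, a j ^ 2) (fun m => sq_nonneg _)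
    intro N
    have hsub : Finset.range N ⊆ insert 0 (Finset.Icc 1 N) := by
      intro i hi
      simp only [Finset.mem_range] at hi
      simp only [Finset.mem_insert, Finset.mem_Icc]
      omega
    calc ∑ i ∈ Finset.range N, b i ^ 2
        ≤ ∑ i ∈ insert 0 (Finset.Icc 1 N), b i ^ 2 :=
          Finset.sum_le_sum_of_subset_of_nonneg hsub (fun i _ _ => sq_nonneg _)
      _ = b 0 ^ 2 + ∑ i ∈ Finset.Icc 1 N, b i ^ 2 := Finset.sum_insert (by simp)
      _ ≤ 4 * ∑' j, a j ^ 2 := by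
          have : b 0 = 0 := by simp [hb, hS]
          rw [this]; simpa using hardy N
  have hTb : (0:ℝ) ≤ ∑' m, b m ^ 2 := tsum_nonneg fun m => sq_nonneg _
  -- C₀ positivity
  have hC₀ : (1:ℝ) ≤ C₀ := by
    have h1 := hratio 0
    have h2' : (1:ℝ) ≤ (n 1 : ℝ) / n 0 := by
      rw [le_div_iff₀ (by exact_mod_cast hpos 0)]
      have := hmono (show (0:ℕ) < 1 by norm_num)
      simp only [one_mul]
      exact_mod_cast this.le
    linarith
  have hC₀0 : (0:ℝ) < C₀ := lt_of_lt_of_le one_pos hC₀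
  -- real gap
  set G : ℕ → ℝ := fun k => (n (k + 1) : ℝ) - n k with hG
  have hG0 : ∀ k, 0 ≤ G k := by
    intro k
    have := hmono (lt_add_one k)
    simp only [hG, sub_nonneg]
    exact_mod_cast this.le
  -- blockwise bound
  have hblock : ∀ k, G k * b (n k) ^ 2 ≤
      C₀ ^ 2 * ∑ j ∈ Finset.Ico (n k) (n (k + 1)), b j ^ 2 := by
    intro k
    have hcard : (Finset.Ico (n k) (n (k + 1))).card = n (k + 1) - n k :=
      Nat.card_Ico _ _
    have hGcard : G k = ((Finset.Ico (n k) (n (k + 1))).card : ℝ) := by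
      rw [hcard, hG]
      have := (hmono (lt_add_one k)).le
      push_cast [Nat.cast_sub this]
      ring
    have hconst : (((Finset.Ico (n k) (n (k + 1))).card : ℝ)) * b (n k) ^ 2
        = ∑ _j ∈ Finset.Ico (n k) (n (k + 1)), b (n k) ^ 2 := by
      rw [Finset.sum_const, nsmul_eq_mul]
    rw [hGcard, hconst, Finset.mul_sum]
    apply Finset.sum_le_sum
    intro j hj
    simp only [Finset.mem_Ico] at hj
    -- b (n k) ≤ C₀ * b j
    have hj0 : 0 < j := lt_of_lt_of_le (hpos k) hj.1
    have hjr : (0:ℝ) < j := by exact_mod_cast hj0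
    have hnk : (0:ℝ) < n k := by exact_mod_cast hpos k
    have hjle : (j:ℝ) ≤ C₀ * n k := by
      have h1 : (j:ℝ) < n (k + 1) := by exact_mod_cast hj.2
      have h2' : (n (k + 1) : ℝ) ≤ C₀ * n k := by
        have := hratio k
        rw [div_le_iff₀ hnk] at this
        exact this
      linarith
    have hSle : S (n k) ≤ S j := hSmono hj.1
    have hble : b (n k) ≤ C₀ * b j := by
      rw [hb, div_le_iff₀ hnk]
      have h1 : b j * j = S j := by rw [hb]; field_simp
      have h2' : b j * j ≤ b j * (C₀ * n k) :=
        mul_le_mul_of_nonneg_left hjle (hbnonneg j)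
      calc S (n k) ≤ S j := hSle
        _ = b j * j := h1.symm
        _ ≤ b j * (C₀ * n k) := h2'
        _ = C₀ * b j * n k := by ring
    calc b (n k) ^ 2 ≤ (C₀ * b j) ^ 2 := by
          apply pow_le_pow_left₀ (hbnonneg (n k)) hble
      _ = C₀ ^ 2 * b j ^ 2 := by ring
  -- summability of G k * b (n k)^2
  have hGbsum : Summable (fun k => G k * b (n k) ^ 2) := by
    apply summable_of_sum_range_le
      (c := C₀ ^ 2 * ∑' m, b m ^ 2)
      (fun k => mul_nonneg (hG0 k) (sq_nonneg _))
    intro K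
    have hsum : ∑ k ∈ Finset.range K, ∑ j ∈ Finset.Ico (n k) (n (k + 1)), b j ^ 2
        = ∑ j ∈ Finset.Ico (n 0) (n K), b j ^ 2 := by
      induction K with
      | zero => simp
      | succ K ih =>
        rw [Finset.sum_range_succ, ih]
        exact Finset.sum_Ico_consecutive _ (hmono.monotone (Nat.zero_le K))
          (hmono (lt_add_one K)).le
    calc ∑ k ∈ Finset.range K, G k * b (n k) ^ 2
        ≤ ∑ k ∈ Finset.range K, C₀ ^ 2 * ∑ j ∈ Finset.Ico (n k) (n (k + 1)), b j ^ 2 :=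
          Finset.sum_le_sum fun k _ => hblock k
      _ = C₀ ^ 2 * ∑ j ∈ Finset.Ico (n 0) (n K), b j ^ 2 := by
          rw [← Finset.mul_sum, hsum]
      _ ≤ C₀ ^ 2 * ∑' m, b m ^ 2 := by
          apply mul_le_mul_of_nonneg_left _ (sq_nonneg C₀)
          exact Summable.sum_le_tsum _ (fun m _ => sq_nonneg _) hbsum
  -- summability of a (n k)^2
  have hasum : Summable (fun k => a (n k) ^ 2) := h2.comp_injective hmono.injective
  -- part 1
  have hg : Summable (fun k =>
      Real.sqrt ((n (k + 1) : ℝ) - n k) * a (n k) * (∑ j ∈ Finset.Icc 1 (n k), a j) / n k) := by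
    apply Summable.of_nonneg_of_le
    · intro k
      apply div_nonneg _ (Nat.cast_nonneg _)
      exact mul_nonneg (mul_nonneg (Real.sqrt_nonneg _) (ha _)) (hSnonneg (n k))
    · intro k
      show Real.sqrt ((n (k + 1) : ℝ) - n k) * a (n k) * S (n k) / n k ≤
        (a (n k) ^ 2 + G k * b (n k) ^ 2) / 2
      have heq : Real.sqrt ((n (k + 1) : ℝ) - n k) * a (n k) * S (n k) / n k
          = a (n k) * (Real.sqrt (G k) * b (n k)) := by
        rw [hG, hb]; ring
      rw [heq]
      have hy2 : (Real.sqrt (G k) * b (n k)) ^ 2 = G k * b (n k) ^ 2 := by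
        rw [mul_pow, Real.sq_sqrt (hG0 k)]
      rw [← hy2]
      nlinarith [sq_nonneg (a (n k) - Real.sqrt (G k) * b (n k))]
    · exact ((hasum.add hGbsum).div_const 2)
  refine ⟨hg, ?_⟩
  -- part 2
  set f : ℕ → ℝ := fun k => a (n k) / t (n k) * ∑ j ∈ Finset.Icc 1 (n k), a j with hf
  have hfnonneg : ∀ k, 0 ≤ f k := by
    intro k
    exact mul_nonneg (div_nonneg (ha _) (ht (n k)).1.le) (hSnonneg (n k))
  have hfreq : ∀ ε : ℝ, 0 < ε → ∃ᶠ k in atTop, f k < ε := by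
    intro ε hε
    by_contra hcon
    rw [Filter.not_frequently] at hcon
    simp only [not_lt] at hcon
    rw [Filter.eventually_atTop] at hcon
    obtain ⟨N, hN⟩ := hcon
    apply hdiv
    rw [← summable_nat_add_iff N]
    apply Summable.of_nonneg_of_le
      (f := fun k => (1/ε) * (Real.sqrt ((n (k + N + 1) : ℝ) - n (k + N)) * a (n (k + N)) *
        (∑ j ∈ Finset.Icc 1 (n (k + N)), a j) / n (k + N)))
    · intro k
      apply div_nonneg _ (Nat.cast_nonneg _)
      exact mul_nonneg (Real.sqrt_nonneg _) (ht (n (k + N))).1.le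
    · intro k
      have hk := hN (k + N) (Nat.le_add_left N k)
      have htpos := (ht (n (k + N))).1
      have htle : t (n (k + N)) ≤ a (n (k + N)) * S (n (k + N)) / ε := by
        rw [le_div_iff₀ hε]
        rw [hf] at hk
        have : ε * t (n (k + N)) ≤ a (n (k + N)) / t (n (k + N)) *
            S (n (k + N)) * t (n (k + N)) :=
          mul_le_mul_of_nonneg_right hk htpos.le
        calc t (n (k + N)) * ε = ε * t (n (k + N)) := by ring
          _ ≤ a (n (k + N)) / t (n (k + N)) * S (n (k + N)) * t (n (k + N)) := this
          _ = a (n (k + N)) * S (n (k + N)) := by field_simp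
      have hnr : (0:ℝ) ≤ (n (k + N) : ℝ) := Nat.cast_nonneg _
      have hsq : (0:ℝ) ≤ Real.sqrt ((n (k + N + 1) : ℝ) - n (k + N)) := Real.sqrt_nonneg _
      calc Real.sqrt ((n (k + N + 1) : ℝ) - n (k + N)) * t (n (k + N)) / n (k + N)
          ≤ Real.sqrt ((n (k + N + 1) : ℝ) - n (k + N)) *
            (a (n (k + N)) * S (n (k + N)) / ε) / n (k + N) := by
            gcongr
        _ = (1/ε) * (Real.sqrt ((n (k + N + 1) : ℝ) - n (k + N)) * a (n (k + N)) *
            S (n (k + N)) / n (k + N)) := by ring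
    · exact ((summable_nat_add_iff N).2 hg).mul_left (1/ε)
  -- liminf
  have hbdd : IsBoundedUnder (· ≥ ·) atTop f :=
    ⟨0, Filter.eventually_map.2 (Filter.Eventually.of_forall hfnonneg)⟩
  have hcob : IsCoboundedUnder (· ≥ ·) atTop f := by
    refine ⟨1, fun c hc => ?_⟩
    have := (hfreq 1 one_pos).and_eventually (Filter.eventually_map.1 hc)
    obtain ⟨k, hk1, hk2⟩ := this.exists
    exact le_trans hk2 hk1.le
  have hle : Filter.atTop.liminf f ≤ 0 := by
    apply le_of_forall_pos_le_add
    intro ε hε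
    have h1 : Filter.atTop.liminf f ≤ ε := by
      apply Filter.liminf_le_of_frequently_le _ hbdd
      exact (hfreq ε hε).mono fun k hk => hk.le
    linarith
  have hge : (0:ℝ) ≤ Filter.atTop.liminf f :=
    Filter.le_liminf_of_le hcob (Filter.Eventually.of_forall hfnonneg)
  exact le_antisymm hle hge
end

section
/- Let {a_m}_{m≥0}, {B_m}_{m≥0}, {y_m}_{m≥1}, {t_m}_{m≥1} be nonnegative real sequences with B_m > 0 and t_m ∈ (0,1] nonincreasing, satisfying a_m = a_{m-1} − b(2−b)y_m², B_m = B_{m-1} + b y_m, and y_m ≥ t_m a_{m-1}/B_{m-1} for some b ∈ (0,1], with a₀ ≤ B₀². Then for each m, a_m B_m^{-2} ≤ (1 + b(2−b) ∑_{k=1}^m t_k²)^{-1}. -/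
lemma key_step (S s x : ℝ) (hS : 0 < S) (hs : 0 ≤ s) (hx : 0 ≤ x)
    (h : x ≤ S⁻¹) : x - s * x ^ 2 ≤ (S + s)⁻¹ := by
  rw [inv_eq_one_div, le_div_iff₀ (by linarith)]
  have hxS : x * S ≤ 1 := by
    rw [inv_eq_one_div, le_div_iff₀ hS] at h; linarith
  rcases le_or_gt (s * x) 1 with h1 | h1
  · nlinarith [mul_nonneg (sub_nonneg.2 hxS) (sub_nonneg.2 h1), sq_nonneg (s * x)]
  · nlinarith [mul_nonneg (by linarith : (0:ℝ) ≤ s * x - 1) (mul_nonneg hx hS.le),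
      sq_nonneg (2 * s * x - 1), hxS]

theorem stmt7 (a B y t : ℕ → ℝ) (b : ℝ) (hb : b ∈ Set.Ioc (0 : ℝ) 1)
    (ha : ∀ m, 0 ≤ a m) (hB : ∀ m, 0 < B m) (hy : ∀ m, 0 ≤ y m)
    (ht : ∀ m, t m ∈ Set.Ioc (0 : ℝ) 1) (htmono : ∀ m, t (m + 1) ≤ t m)
    (hrec : ∀ m, a (m + 1) = a m - b * (2 - b) * y (m + 1) ^ 2)
    (hBrec : ∀ m, B (m + 1) = B m + b * y (m + 1))
    (hgreedy : ∀ m, t (m + 1) * a m / B m ≤ y (m + 1))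
    (h0 : a 0 ≤ B 0 ^ 2) :
    ∀ m, a m / B m ^ 2 ≤ (1 + b * (2 - b) * ∑ k ∈ Finset.Icc 1 m, t k ^ 2)⁻¹ := by
  have hbb : 0 < b * (2 - b) := by nlinarith [hb.1, hb.2]
  have hsum : ∀ m, (0:ℝ) ≤ ∑ k ∈ Finset.Icc 1 m, t k ^ 2 := fun m =>
    Finset.sum_nonneg fun k _ => sq_nonneg _
  intro m
  induction m with
  | zero =>
    have h0B := hB 0
    simp only [show Finset.Icc 1 0 = (∅ : Finset ℕ) by rfl, Finset.sum_empty, mul_zero, add_zero,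
      inv_one]
    rw [div_le_one (by positivity)]
    exact h0
  | succ m ih =>
    set S := 1 + b * (2 - b) * ∑ k ∈ Finset.Icc 1 m, t k ^ 2 with hSdef
    have hSpos : 0 < S := by have := mul_nonneg hbb.le (hsum m); linarith
    set s := b * (2 - b) * t (m + 1) ^ 2 with hsdef
    have hspos : 0 < s := mul_pos hbb (pow_pos (ht (m+1)).1 2)
    have hSsucc : 1 + b * (2 - b) * ∑ k ∈ Finset.Icc 1 (m+1), t k ^ 2 = S + s := by
      rw [Finset.sum_Icc_succ_top (by omega : 1 ≤ m + 1)]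
      ring
    rw [hSsucc]
    -- x' ≤ x - s x^2
    have hBm := hB m
    have hBm1 := hB (m+1)
    have hBle : B m ≤ B (m+1) := by
      rw [hBrec]; nlinarith [hy (m+1), hb.1]
    have hy2 : (t (m+1) * a m / B m) ^ 2 ≤ y (m+1) ^ 2 := by
      have h1 := hgreedy m
      have h2 : 0 ≤ t (m+1) * a m / B m := by
        have := (ht (m+1)).1; have := ha m; positivity
      nlinarith
    have ha1 : a (m + 1) ≤ a m - b * (2 - b) * (t (m+1) * a m / B m) ^ 2 := by
      rw [hrec]; nlinarith
    have step1 : a (m+1) / B (m+1) ^ 2 ≤ a (m+1) / B m ^ 2 := by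
      gcongr
      exact ha (m+1)
    have step2 : a (m+1) / B m ^ 2 ≤ a m / B m ^ 2 - s * (a m / B m ^ 2) ^ 2 := by
      have h3 : a (m+1) / B m ^ 2 ≤
          (a m - b * (2 - b) * (t (m+1) * a m / B m) ^ 2) / B m ^ 2 := by
        gcongr
      refine h3.trans_eq ?_
      rw [hsdef]
      field_simp
    have hx0 : 0 ≤ a m / B m ^ 2 := by have := ha m; positivity
    calc a (m+1) / B (m+1) ^ 2 ≤ a m / B m ^ 2 - s * (a m / B m ^ 2) ^ 2 :=
          step1.trans step2
      _ ≤ (S + s)⁻¹ := key_step S s _ hSpos hspos.le hx0 ih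
end

section
/- Under the same recursion assumptions (a_m = a_{m-1} − b(2−b)y_m², B_m = B_{m-1} + by_m, y_m ≥ t_m a_{m-1}/B_{m-1}, b ∈ (0,1], {t_m} nonincreasing in (0,1]), one has for each m: a_m B_m^{(2−b)t_m} ≤ a₀ B₀^{(2−b)t_m}. -/
open Real

lemma keyineq8 (α x : ℝ) (hα : 0 < α) (hx : 0 ≤ x) (hx1 : x ≤ 1) :
    (1 - x) * (1 + x / α) ^ α ≤ 1 := by
  have h1 : (0:ℝ) ≤ 1 + x / α := by positivity
  have h2 : 1 + x / α ≤ Real.exp (x / α) := by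
    have := Real.add_one_le_exp (x / α); linarith
  have h3 : (1 + x / α) ^ α ≤ Real.exp (x / α) ^ α :=
    Real.rpow_le_rpow h1 h2 hα.le
  have h4 : Real.exp (x / α) ^ α = Real.exp x := by
    rw [← Real.exp_mul, div_mul_cancel₀ _ hα.ne']
  have h5 : 1 - x ≤ Real.exp (-x) := by
    have := Real.add_one_le_exp (-x); linarith
  have h6 : (1 - x) * Real.exp x ≤ 1 := by
    calc (1 - x) * Real.exp x ≤ Real.exp (-x) * Real.exp x :=
          mul_le_mul_of_nonneg_right h5 (Real.exp_pos x).le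
      _ = 1 := by rw [← Real.exp_add]; simp
  calc (1 - x) * (1 + x / α) ^ α ≤ (1 - x) * Real.exp x := by
        rw [← h4]; exact mul_le_mul_of_nonneg_left h3 (by linarith)
    _ ≤ 1 := h6

theorem stmt8 (a B y t : ℕ → ℝ) (b : ℝ) (hb : b ∈ Set.Ioc (0 : ℝ) 1)
    (ha : ∀ m, 0 ≤ a m) (hB : ∀ m, 0 < B m) (hy : ∀ m, 0 ≤ y m)
    (ht : ∀ m, t m ∈ Set.Ioc (0 : ℝ) 1) (htmono : ∀ m, t (m + 1) ≤ t m)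
    (hrec : ∀ m, a (m + 1) = a m - b * (2 - b) * y (m + 1) ^ 2)
    (hBrec : ∀ m, B (m + 1) = B m + b * y (m + 1))
    (hgreedy : ∀ m, t (m + 1) * a m / B m ≤ y (m + 1)) :
    ∀ m, a m * B m ^ ((2 - b) * t m) ≤ a 0 * B 0 ^ ((2 - b) * t m) := by
  obtain ⟨hb0, hb1⟩ := hb
  have h2b : 0 < 2 - b := by linarith
  -- B is increasing from B 0
  have hBmono : ∀ m, B 0 ≤ B m := by
    intro m
    induction m with
    | zero => exact le_refl _
    | succ n ih =>
      have : B n ≤ B (n + 1) := by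
        rw [hBrec n]; nlinarith [hy (n+1)]
      linarith
  -- ratio version
  have Q : ∀ m, a m * (B m / B 0) ^ ((2 - b) * t m) ≤ a 0 := by
    intro m
    induction m with
    | zero => simp [div_self (hB 0).ne']
    | succ n ih =>
      set c := (2 - b) * t (n + 1) with hc
      have htc : 0 < t (n + 1) := (ht (n + 1)).1
      have hcpos : 0 < c := mul_pos h2b htc
      set x := b * (2 - b) * t (n + 1) * y (n + 1) / B n with hxdef
      have hxnn : 0 ≤ x := by
        apply div_nonneg _ (hB n).le
        have := hy (n + 1)
        positivity
      -- a (n+1) ≤ a n * (1 - x)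
      have hstep : a (n + 1) ≤ a n * (1 - x) := by
        rw [hrec n]
        have hg : t (n + 1) * a n / B n ≤ y (n + 1) := hgreedy n
        have h1 : t (n + 1) * a n / B n * y (n + 1) ≤ y (n + 1) ^ 2 := by
          nlinarith [hy (n + 1)]
        have hBne := (hB n).ne'
        rw [hxdef]
        have : a n * (1 - b * (2 - b) * t (n + 1) * y (n + 1) / B n)
            = a n - b * (2 - b) * (t (n + 1) * a n / B n * y (n + 1)) := by
          field_simp
        rw [this]
        nlinarith [mul_le_mul_of_nonneg_left h1 (by positivity : (0:ℝ) ≤ b * (2 - b))]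
      have hr1 : (1:ℝ) ≤ B n / B 0 := (one_le_div (hB 0)).mpr (hBmono n)
      have hrpos : (0:ℝ) < B n / B 0 := by linarith
      -- key step: a(n+1) * (B(n+1)/B0)^c ≤ a n * (B n / B 0)^c
      have hkey : a (n + 1) * (B (n + 1) / B 0) ^ c ≤ a n * (B n / B 0) ^ c := by
        have hBpos' := hB (n + 1)
        have hpow : (0:ℝ) < (B (n + 1) / B 0) ^ c :=
          Real.rpow_pos_of_pos (div_pos hBpos' (hB 0)) c
        rcases le_or_gt (1 - x) 0 with hneg | hpos
        · have h1 : a (n + 1) * (B (n + 1) / B 0) ^ c ≤ a n * (1 - x) * (B (n + 1) / B 0) ^ c :=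
            mul_le_mul_of_nonneg_right hstep hpow.le
          have h2 : a n * (1 - x) ≤ 0 := mul_nonpos_of_nonneg_of_nonpos (ha n) hneg
          have h3 : a n * (1 - x) * (B (n + 1) / B 0) ^ c ≤ 0 :=
            mul_nonpos_of_nonpos_of_nonneg h2 hpow.le
          have h4 : 0 ≤ a n * (B n / B 0) ^ c :=
            mul_nonneg (ha n) (Real.rpow_pos_of_pos hrpos c).le
          linarith
        · have hx1 : x ≤ 1 := by linarith
          -- B (n+1) / B 0 = (B n / B 0) * (1 + x / c)
          have h2bne : (2 - b) ≠ 0 := h2b.ne'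
          have htne : t (n + 1) ≠ 0 := htc.ne'
          have hBne : B n ≠ 0 := (hB n).ne'
          have hxc : x / c = b * y (n + 1) / B n := by
            rw [hxdef, hc]
            field_simp
          have hnum : B (n + 1) = B n * (1 + x / c) := by
            rw [hxc, hBrec n, mul_add, mul_one, mul_div_assoc', mul_comm (B n),
              mul_div_assoc, div_self hBne, mul_one]
          have hsplit : B (n + 1) / B 0 = (B n / B 0) * (1 + x / c) := by
            rw [hnum]; ring
          have h1xc : (0:ℝ) ≤ 1 + x / c := by
            have h := div_nonneg (mul_nonneg hb0.le (hy (n + 1))) (hB n).le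
            rw [hxc]; linarith
          have hrpow : (B (n + 1) / B 0) ^ c = (B n / B 0) ^ c * (1 + x / c) ^ c := by
            rw [hsplit, Real.mul_rpow hrpos.le h1xc]
          have hk := keyineq8 c x hcpos hxnn hx1
          calc a (n + 1) * (B (n + 1) / B 0) ^ c
              ≤ a n * (1 - x) * (B (n + 1) / B 0) ^ c :=
                mul_le_mul_of_nonneg_right hstep hpow.le
            _ = a n * (B n / B 0) ^ c * ((1 - x) * (1 + x / c) ^ c) := by
                rw [hrpow]; ring
            _ ≤ a n * (B n / B 0) ^ c * 1 := by
                apply mul_le_mul_of_nonneg_left hk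
                exact mul_nonneg (ha n) (Real.rpow_pos_of_pos hrpos c).le
            _ = a n * (B n / B 0) ^ c := by ring
      -- exponent monotonicity
      have hexp : (B n / B 0) ^ c ≤ (B n / B 0) ^ ((2 - b) * t n) := by
        apply Real.rpow_le_rpow_of_exponent_le hr1
        exact mul_le_mul_of_nonneg_left (htmono n) h2b.le
      calc a (n + 1) * (B (n + 1) / B 0) ^ c ≤ a n * (B n / B 0) ^ c := hkey
        _ ≤ a n * (B n / B 0) ^ ((2 - b) * t n) :=
            mul_le_mul_of_nonneg_left hexp (ha n)
        _ ≤ a 0 := ih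
  intro m
  have hq := Q m
  have hdiv : (B m / B 0) ^ ((2 - b) * t m) = B m ^ ((2 - b) * t m) / B 0 ^ ((2 - b) * t m) :=
    Real.div_rpow (hB m).le (hB 0).le _
  rw [hdiv] at hq
  have hB0pow : (0:ℝ) < B 0 ^ ((2 - b) * t m) := Real.rpow_pos_of_pos (hB 0) _
  rw [← mul_div_assoc, div_le_iff₀ hB0pow] at hq
  linarith
end

section
/- Let H be a Hilbert space with an orthonormal basis Ψ = {ψ_k}, and let τ = {t_k} be a weakness sequence in (0,1] with ∑_{k=1}^∞ t_k = ∞. Then for every f ∈ A₁(Ψ) (i.e., with coefficient sequence c(f) satisfying ∑|c_k(f)| ≤ 1), every realization of the Weak Thresholding Greedy Algorithm WTGA(τ) converges: ‖f − G_m^τ(f)‖ → 0 as m → ∞. -/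
theorem stmt9 {H : Type*} [NormedAddCommGroup H] [InnerProductSpace ℝ H]
    [CompleteSpace H] (Ψ : HilbertBasis ℕ ℝ H)
    (t : ℕ → ℝ) (ht : ∀ m, t m ∈ Set.Ioc (0 : ℝ) 1) (hdiv : ¬ Summable t)
    (f : H) (hsum : Summable (fun i => |Ψ.repr f i|)) (hA1 : ∑' i, |Ψ.repr f i| ≤ 1)
    (k : ℕ → ℕ) (F : ℕ → H) (hF0 : F 0 = f)
    (hFrec : ∀ m, F (m + 1) = F m - Ψ.repr (F m) (k (m + 1)) • Ψ (k (m + 1)))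
    (hgreedy : ∀ m, t (m + 1) * (⨆ i, |Ψ.repr (F m) i|) ≤ |Ψ.repr (F m) (k (m + 1))|) :
    Filter.Tendsto (fun m => ‖F m‖) Filter.atTop (nhds 0) := by
  classical
  set g : ℕ → ℕ → ℝ := fun m i => |Ψ.repr (F m) i| with hg
  have hg_nonneg : ∀ m i, 0 ≤ g m i := fun m i => abs_nonneg _
  -- coefficient recursion
  have hrec : ∀ m i, Ψ.repr (F (m + 1)) i = if i = k (m + 1) then 0 else Ψ.repr (F m) i := by
    intro m i
    rw [hFrec m, map_sub, map_smul, Ψ.repr_self]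
    by_cases h : i = k (m + 1)
    · subst h
      show Ψ.repr (F m) (k (m + 1)) - Ψ.repr (F m) (k (m + 1)) * (lp.single 2 (k (m + 1)) (1:ℝ) : lp (fun _ : ℕ => ℝ) 2) (k (m + 1)) = _
      simp [lp.single_apply_self]
    · show Ψ.repr (F m) i - Ψ.repr (F m) (k (m + 1)) * (lp.single 2 (k (m + 1)) (1:ℝ) : lp (fun _ : ℕ => ℝ) 2) i = _
      simp [lp.single_apply_ne _ _ _ h, h]
  have hgrec : ∀ m i, g (m + 1) i = if i = k (m + 1) then 0 else g m i := by
    intro m i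
    simp only [hg, hrec m i]
    split <;> simp
  have hgle : ∀ m i, g (m + 1) i ≤ g m i := by
    intro m i
    rw [hgrec]
    split
    · exact hg_nonneg m i
    · exact le_rfl
  have hg0 : g 0 = fun i => |Ψ.repr f i| := by simp [hg, hF0]
  -- summability of each g m
  have hSummable : ∀ m, Summable (g m) := by
    intro m
    induction m with
    | zero => rw [hg0]; exact hsum
    | succ n ih => exact ih.of_nonneg_of_le (hg_nonneg (n + 1)) (hgle n)
  -- tsum recursion
  set T : ℕ → ℝ := fun m => ∑' i, g m i with hT
  have hTrec : ∀ m, T (m + 1) = T m - g m (k (m + 1)) := by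
    intro m
    have h1 : T m = g m (k (m + 1)) + ∑' i, if i = k (m + 1) then 0 else g m i :=
      Summable.tsum_eq_add_tsum_ite (hSummable m) (k (m + 1))
    have h2 : T (m + 1) = ∑' i, if i = k (m + 1) then 0 else g m i :=
      tsum_congr fun i => hgrec m i
    rw [h2]; linarith
  have hT_nonneg : ∀ m, 0 ≤ T m := fun m => tsum_nonneg (hg_nonneg m)
  have hT0 : T 0 ≤ 1 := by
    have h : T 0 = ∑' i, |Ψ.repr f i| := tsum_congr fun i => congrFun hg0 i
    rw [h]; exact hA1
  have hT_anti : ∀ m, T (m + 1) ≤ T m := by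
    intro m; rw [hTrec]; linarith [hg_nonneg m (k (m + 1))]
  have hT_le : ∀ m, T m ≤ 1 := by
    intro m
    induction m with
    | zero => exact hT0
    | succ n ih => exact (hT_anti n).trans ih
  -- partial sums of removed coefficients
  have hpartial : ∀ M, ∑ j ∈ Finset.range M, g j (k (j + 1)) = T 0 - T M := by
    intro M
    induction M with
    | zero => simp
    | succ n ih => rw [Finset.sum_range_succ, ih, hTrec n]; ring
  have hd_summable : Summable (fun m => g m (k (m + 1))) := by
    apply summable_of_sum_range_le (fun m => hg_nonneg m (k (m + 1)))
    intro M
    rw [hpartial M]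
    linarith [hT_nonneg M, hT0]
  -- sup of coefficients
  have hbdd : ∀ m, BddAbove (Set.range (g m)) := by
    intro m
    exact ⟨T m, by rintro x ⟨i, rfl⟩; exact Summable.le_tsum (hSummable m) i fun j _ => hg_nonneg m j⟩
  set S : ℕ → ℝ := fun m => ⨆ i, g m i with hS
  have hS_nonneg : ∀ m, 0 ≤ S m := fun m => (hg_nonneg m 0).trans (le_ciSup (hbdd m) 0)
  have hS_anti : Antitone S := by
    apply antitone_nat_of_succ_le
    intro m
    exact ciSup_le fun i => (hgle m i).trans (le_ciSup (hbdd m) i)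
  -- limit of S is 0
  have hSlim : Filter.Tendsto S Filter.atTop (nhds (⨅ m, S m)) :=
    tendsto_atTop_ciInf hS_anti ⟨0, by rintro x ⟨m, rfl⟩; exact hS_nonneg m⟩
  have hinf_nonneg : 0 ≤ ⨅ m, S m := le_ciInf hS_nonneg
  have hinf_zero : (⨅ m, S m) = 0 := by
    by_contra hne
    have ha : 0 < ⨅ m, S m := lt_of_le_of_ne hinf_nonneg (Ne.symm hne)
    set a := ⨅ m, S m
    have key : ∀ m, t (m + 1) * a ≤ g m (k (m + 1)) := by
      intro m
      calc t (m + 1) * a ≤ t (m + 1) * S m := by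
            apply mul_le_mul_of_nonneg_left _ (le_of_lt (ht (m + 1)).1)
            exact ciInf_le ⟨0, by rintro x ⟨n, rfl⟩; exact hS_nonneg n⟩ m
        _ ≤ g m (k (m + 1)) := hgreedy m
    have hts : Summable (fun m => t (m + 1) * a) :=
      hd_summable.of_nonneg_of_le
        (fun m => mul_nonneg (le_of_lt (ht (m + 1)).1) (le_of_lt ha)) key
    have : Summable (fun m => t (m + 1)) := by
      have := hts.mul_right (a⁻¹)
      simpa [mul_assoc, mul_inv_cancel₀ (ne_of_gt ha)] using this
    exact hdiv ((summable_nat_add_iff 1).mp this)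
  rw [hinf_zero] at hSlim
  -- norm bound: ‖F m‖ ^ 2 ≤ S m
  have hnorm_sq : ∀ m, ‖F m‖ ^ 2 ≤ S m := by
    intro m
    have hpars : ∑' i, (Ψ.repr (F m) i) * (Ψ.repr (F m) i) = ‖F m‖ ^ 2 := by
      have := Ψ.tsum_inner_mul_inner (F m) (F m)
      rw [real_inner_self_eq_norm_sq] at this
      rw [← this]
      refine tsum_congr fun i => ?_
      rw [Ψ.repr_apply_apply]
      rw [real_inner_comm (F m) (Ψ i)]
    have hsq_le : ∀ i, (Ψ.repr (F m) i) * (Ψ.repr (F m) i) ≤ S m * g m i := by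
      intro i
      have h1 : (Ψ.repr (F m) i) * (Ψ.repr (F m) i) = g m i * g m i := by
        rw [hg]; simp [abs_mul_abs_self]
      rw [h1]
      exact mul_le_mul_of_nonneg_right (le_ciSup (hbdd m) i) (hg_nonneg m i)
    have hsq_summable : Summable (fun i => (Ψ.repr (F m) i) * (Ψ.repr (F m) i)) := by
      apply ((hSummable m).mul_left (S m)).of_nonneg_of_le
        (fun i => mul_self_nonneg _) hsq_le
    calc ‖F m‖ ^ 2 = ∑' i, (Ψ.repr (F m) i) * (Ψ.repr (F m) i) := hpars.symm
      _ ≤ ∑' i, S m * g m i := Summable.tsum_le_tsum hsq_le hsq_summable ((hSummable m).mul_left (S m))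
      _ = S m * T m := tsum_mul_left
      _ ≤ S m * 1 := mul_le_mul_of_nonneg_left (hT_le m) (hS_nonneg m)
      _ = S m := mul_one _
  -- squeeze
  have hub : ∀ m, ‖F m‖ ≤ Real.sqrt (S m) := by
    intro m
    have h := hnorm_sq m
    nlinarith [Real.sq_sqrt (hS_nonneg m), Real.sqrt_nonneg (S m), norm_nonneg (F m)]
  have hsqrt : Filter.Tendsto (fun m => Real.sqrt (S m)) Filter.atTop (nhds 0) := by
    have := (Real.continuous_sqrt.tendsto 0).comp hSlim
    simpa [Function.comp_def] using this
  exact squeeze_zero (fun m => norm_nonneg _) hub hsqrt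
end

section
/- Let Ψ = {ψ_k} be an orthonormal basis of a Hilbert space H and τ = {t_k} a weakness sequence with ∑ t_k < ∞. Then there exists f ∈ A₁(Ψ) and a realization of the WTGA(τ) which does not converge to f. Specifically, for f₀ := ψ₁ + ∑_{k≥2} t_{k-1}ψ_k, one realization produces G_m^τ(f₀) = ∑_{k=2}^{m+1} t_{k-1}ψ_k, whose residual does not tend to 0; normalizing, f* := f₀(1 + ∑ t_k)^{-1} ∈ A₁(Ψ). -/
open scoped RealInnerProductSpace


/-- If `∑ t_k < ∞`, the WTGA(τ) need not converge on `A₁(Ψ)`: for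
`f₀ := ψ₁ + ∑_{k ≥ 2} t_{k-1} ψ_k` (here `ψ₁ = Ψ 0` and coefficient `t j` sits at
index `j`, `j ≥ 1`), the realization selecting index `m` at step `m` is a valid
realization of the WTGA(τ), the normalized element `f* = (1 + ∑ t)⁻¹ f₀` lies in
`A₁(Ψ)`, and the residuals do not tend to `0`. -/
theorem stmt10 {H : Type*} [NormedAddCommGroup H] [InnerProductSpace ℝ H]
    [CompleteSpace H] (Ψ : HilbertBasis ℕ ℝ H)
    (t : ℕ → ℝ) (ht : ∀ m, t m ∈ Set.Ioc (0 : ℝ) 1) (hconv : Summable t) :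
    ∃ (f : H) (k : ℕ → ℕ) (F : ℕ → H),
      f = (1 + ∑' j, t (j + 1))⁻¹ • (Ψ 0 + ∑' j, t (j + 1) • Ψ (j + 1)) ∧
      (∀ m, k (m + 1) = m + 1) ∧
      (∑' i, |Ψ.repr f i| ≤ 1) ∧
      F 0 = f ∧
      (∀ m, F (m + 1) = F m - Ψ.repr (F m) (k (m + 1)) • Ψ (k (m + 1))) ∧
      (∀ m, t (m + 1) * (⨆ i, |Ψ.repr (F m) i|) ≤ |Ψ.repr (F m) (k (m + 1))|) ∧
      ¬ Filter.Tendsto (fun m => ‖F m‖) Filter.atTop (nhds 0) := by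
  set T : ℝ := ∑' j, t (j + 1) with hT
  have ht1 : Summable (fun j => t (j + 1)) := (summable_nat_add_iff 1).2 hconv
  have hTnn : 0 ≤ T := tsum_nonneg fun j => (ht (j + 1)).1.le
  have h1T : (0:ℝ) < 1 + T := by linarith
  set c : ℝ := (1 + T)⁻¹ with hc
  have hcpos : 0 < c := inv_pos.2 h1T
  set g : ℕ → ℝ := fun i => if i = 0 then 1 else t i with hg
  have hg0 : g 0 = 1 := rfl
  have hgs : ∀ i, g (i + 1) = t (i + 1) := fun i => rfl
  have hgpos : ∀ i, 0 < g i := by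
    intro i; cases i with
    | zero => norm_num [hg]
    | succ n => simpa [hgs] using (ht (n + 1)).1
  have hgle : ∀ i, g i ≤ 1 := by
    intro i; cases i with
    | zero => norm_num [hg]
    | succ n => simpa [hgs] using (ht (n + 1)).2
  have hgsum : Summable g := by
    refine (summable_nat_add_iff 1).1 ?_
    simpa [hgs] using ht1
  set f : H := c • (Ψ 0 + ∑' j, t (j + 1) • Ψ (j + 1)) with hf
  have hsum : Summable (fun j => t (j + 1) • Ψ (j + 1)) := by
    refine Summable.of_norm ?_
    have : ∀ j, ‖t (j + 1) • Ψ (j + 1)‖ = t (j + 1) := by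
      intro j
      rw [norm_smul, Ψ.orthonormal.1 (j + 1)]
      simp [abs_of_pos (ht (j + 1)).1]
    simpa [this] using ht1
  have horth := orthonormal_iff_ite.1 Ψ.orthonormal
  have hreprf : ∀ i, Ψ.repr f i = c * g i := by
    intro i
    rw [Ψ.repr_apply_apply, hf, real_inner_smul_right]
    congr 1
    rw [inner_add_right]
    have htsum : ⟪Ψ i, ∑' j, t (j + 1) • Ψ (j + 1)⟫ = ∑' j, t (j + 1) * (if i = j + 1 then 1 else 0) := by
      have h := ContinuousLinearMap.map_tsum (innerSL ℝ (Ψ i)) hsum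
      simp only [innerSL_apply_apply] at h
      rw [h]
      exact tsum_congr fun j => by rw [real_inner_smul_right, horth]
    rw [htsum, horth]
    cases i with
    | zero =>
      simp [hg0]
    | succ s =>
      have : (∑' j, t (j + 1) * (if s + 1 = j + 1 then 1 else 0)) = t (s + 1) := by
        rw [← (tsum_ite_eq s (fun _ => t (s + 1)) : (∑' b', if b' = s then t (s + 1) else 0) = t (s + 1))]
        refine tsum_congr fun j => ?_
        by_cases hj : j = s
        · subst hj; simp
        · have hj' : ¬ (s + 1 = j + 1) := by omega
          simp [hj, hj', Ne.symm hj]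
      rw [this, hgs]
      simp
  -- the residual sequence
  set F : ℕ → H := fun m => Nat.rec f (fun m Fm => Fm - Ψ.repr Fm (m + 1) • Ψ (m + 1)) m with hFdef
  have hF0 : F 0 = f := rfl
  have hFs : ∀ m, F (m + 1) = F m - Ψ.repr (F m) (m + 1) • Ψ (m + 1) := fun m => rfl
  -- coefficients of residuals
  have hFrepr : ∀ m i, Ψ.repr (F m) i = if i = 0 ∨ m < i then c * g i else 0 := by
    intro m
    induction m with
    | zero =>
      intro i
      have : i = 0 ∨ 0 < i := by omega
      rw [hF0, hreprf i, if_pos this]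
    | succ m ih =>
      intro i
      rw [hFs m]
      have hx : Ψ.repr (F m - Ψ.repr (F m) (m + 1) • Ψ (m + 1)) i
          = Ψ.repr (F m) i - Ψ.repr (F m) (m + 1) * Ψ.repr (Ψ (m + 1)) i := by
        simp [map_sub, map_smul, lp.coeFn_sub, lp.coeFn_smul]
        rfl
      have hrs : ∀ a b : ℕ, Ψ.repr (Ψ a) b = if a = b then 1 else 0 := fun a b => by
        rw [Ψ.repr_apply_apply, horth]
        exact if_congr eq_comm rfl rfl
      rw [hx, hrs]
      by_cases hi : i = m + 1
      · subst hi
        have h1 : ¬ (m + 1 = 0 ∨ m + 1 < m + 1) := by omega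
        simp [ih, h1]
      · have hi' : ¬ (m + 1 = i) := fun h => hi h.symm
        rw [if_neg hi', mul_zero, sub_zero, ih i]
        by_cases h1 : i = 0 ∨ m < i
        · have h2 : i = 0 ∨ m + 1 < i := by omega
          rw [if_pos h1, if_pos h2]
        · have h2 : ¬ (i = 0 ∨ m + 1 < i) := by omega
          rw [if_neg h1, if_neg h2]
  refine ⟨f, id, F, hf, fun m => rfl, ?_, hF0, fun m => hFs m, ?_, ?_⟩
  · -- A₁ membership
    have habs : ∀ i, |Ψ.repr f i| = c * g i := fun i => by
      rw [hreprf i, abs_of_pos (mul_pos hcpos (hgpos i))]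
    calc ∑' i, |Ψ.repr f i| = ∑' i, c * g i := tsum_congr habs
      _ = c * ∑' i, g i := tsum_mul_left
      _ = c * (1 + T) := by
          rw [Summable.tsum_eq_zero_add hgsum, hg0]
          have hTT : (∑' b, g (b + 1)) = T := tsum_congr fun b => hgs b
          rw [hTT]
      _ = 1 := inv_mul_cancel₀ h1T.ne'
      _ ≤ 1 := le_refl 1
  · -- weak greedy condition
    intro m
    simp only [id]
    have hsup : (⨆ i, |Ψ.repr (F m) i|) ≤ c := by
      refine ciSup_le fun i => ?_
      rw [hFrepr m i]
      split_ifs with h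
      · rw [abs_of_pos (mul_pos hcpos (hgpos i))]
        calc c * g i ≤ c * 1 := by nlinarith [hgle i, hcpos]
          _ = c := mul_one c
      · simpa using hcpos.le
    have hcoef : |Ψ.repr (F m) (m + 1)| = c * t (m + 1) := by
      rw [hFrepr m (m + 1), if_pos (Or.inr (by omega)),
        abs_of_pos (mul_pos hcpos (hgpos (m + 1))), hgs]
    rw [hcoef]
    calc t (m + 1) * (⨆ i, |Ψ.repr (F m) i|) ≤ t (m + 1) * c := by
          nlinarith [(ht (m + 1)).1, hsup]
      _ = c * t (m + 1) := mul_comm _ _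
  · -- non-convergence
    intro hlim
    have hlb : ∀ m, c ≤ ‖F m‖ := by
      intro m
      have h0 : Ψ.repr (F m) 0 = c := by
        rw [hFrepr m 0, if_pos (Or.inl rfl), hg0, mul_one]
      calc c = |Ψ.repr (F m) 0| := by rw [h0, abs_of_pos hcpos]
        _ ≤ ‖Ψ.repr (F m)‖ := by
            simpa using lp.norm_apply_le_norm two_ne_zero (Ψ.repr (F m)) 0
        _ = ‖F m‖ := Ψ.repr.norm_map (F m)
    have := (hlim.eventually (gt_mem_nhds hcpos)).exists
    obtain ⟨m, hm⟩ := this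
    exact absurd (hlb m) (not_le.2 hm)
end

section
/- Let {t_k} ⊂ (0,1] be a weakness sequence that is nonincreasing with ∑ t_k/k = ∞. Then for every sequence {a_j} ∈ ℓ² of nonnegative reals, liminf_{n→∞} (a_n/t_n)∑_{j=1}^n a_j = 0. -/
open Finset

private lemma sum_pow_le_geom {q : ℝ} (h0 : 0 ≤ q) (h1 : q < 1) (s : Finset ℕ) (f : ℕ → ℕ)
    (hinj : ∀ x ∈ s, ∀ y ∈ s, f x = f y → x = y) :
    ∑ i ∈ s, q ^ f i ≤ (1 - q)⁻¹ := by
  calc ∑ i ∈ s, q ^ f i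
      = ∑ k ∈ s.image f, q ^ k := (Finset.sum_image (f := fun k => q ^ k) hinj).symm
    _ ≤ ∑' k : ℕ, q ^ k := Summable.sum_le_tsum _ (fun i _ => pow_nonneg h0 i)
        (summable_geometric_of_lt_one h0 h1)
    _ = (1 - q)⁻¹ := tsum_geometric_of_lt_one h0 h1

private lemma sum_dyadic_blocks (g : ℕ → ℝ) (M d : ℕ) :
    ∑ m ∈ Finset.Icc M (M + d), ∑ n ∈ Finset.Ioc (2 ^ m) (2 ^ (m + 1)), g n
      = ∑ n ∈ Finset.Ioc (2 ^ M) (2 ^ (M + d + 1)), g n := by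
  induction d with
  | zero => simp
  | succ d ih =>
    rw [← add_assoc, Finset.sum_Icc_succ_top (by omega), ih,
      Finset.sum_Ioc_consecutive g (Nat.pow_le_pow_right (by norm_num) (by omega))
        (Nat.pow_le_pow_right (by norm_num) (by omega))]

private lemma two_mul_le {x u v : ℝ} (hx : 0 < x) : 2 * (u * v) ≤ x * u ^ 2 + x⁻¹ * v ^ 2 := by
  have h1 : x * x⁻¹ = 1 := mul_inv_cancel₀ (ne_of_gt hx)
  nlinarith [sq_nonneg (x * u - v), sq_nonneg (x*u + v), mul_pos hx hx, hx]

private def Dd (a : ℕ → ℝ) (m : ℕ) : ℝ := ∑ n ∈ Finset.Ioc (2^m) (2^(m+1)), a n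
private def Pp (a : ℕ → ℝ) (m : ℕ) : ℝ := ∑ n ∈ Finset.Ioc (2^m) (2^(m+1)), a n ^ 2

private lemma main_contra (t : ℕ → ℝ) (ht0 : ∀ k, 0 < t k) (tanti : Antitone t)
    (a : ℕ → ℝ) (ha : ∀ j, 0 ≤ a j) (h2 : Summable (fun j => a j ^ 2))
    (S : ℕ → ℝ) (hS : ∀ n, S n = ∑ j ∈ Finset.Ioc 0 n, a j)
    (ε : ℝ) (hε : 0 < ε) (N : ℕ)
    (hmain : ∀ n, N ≤ n → ε * t n ≤ a n * S n) :
    Summable (fun k : ℕ => t k / k) := by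
  classical
  -- basic facts about S
  have hSnonneg : ∀ n, 0 ≤ S n := fun n => (hS n) ▸ Finset.sum_nonneg fun j _ => ha j
  have hSmono : Monotone S := by
    intro m n h
    rw [hS, hS]
    exact Finset.sum_le_sum_of_subset_of_nonneg
      (Finset.Ioc_subset_Ioc_right h) (fun j _ _ => ha j)
  set M := N + 1 with hMdef
  have hMN : N < 2 ^ M := lt_of_lt_of_le (Nat.lt_two_pow_self (n := N))
    (Nat.pow_le_pow_right (by norm_num) (by omega))
  set T := ∑' j, a j ^ 2 with hTdef
  have hT0 : 0 ≤ T := tsum_nonneg fun i => sq_nonneg _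
  have hfin : ∀ s : Finset ℕ, ∑ j ∈ s, a j ^ 2 ≤ T :=
    fun s => Summable.sum_le_tsum s (fun i _ => sq_nonneg _) h2
  set r := Real.sqrt 2 with hrdef
  have hr0 : 0 < r := Real.sqrt_pos.mpr (by norm_num)
  have hr2 : r ^ 2 = 2 := Real.sq_sqrt (by norm_num)
  have hr1 : 1 < r := by nlinarith
  set q := r⁻¹ with hqdef
  have hq0 : 0 < q := inv_pos.mpr hr0
  have hqr : q * r = 1 := inv_mul_cancel₀ (ne_of_gt hr0)
  have hq1 : q < 1 := by nlinarith
  have hq2 : q * 2 = r := by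
    have : q * (r * r) = r := by rw [← mul_assoc, hqr, one_mul]
    nlinarith
  have hpow : ∀ k : ℕ, r ^ k = q ^ k * 2 ^ k := by
    intro k; rw [← mul_pow, hq2]
  have hqk : ∀ k : ℕ, (r ^ k)⁻¹ = q ^ k := by
    intro k; rw [hqdef, inv_pow]
  set cq := (1 - q)⁻¹ with hcqdef
  have hcq0 : 0 < cq := inv_pos.mpr (by linarith)
  -- nonnegativity of D, P
  have hD0 : ∀ m, 0 ≤ Dd a m := fun m => Finset.sum_nonneg fun j _ => ha j
  have hP0 : ∀ m, 0 ≤ Pp a m := fun m => Finset.sum_nonneg fun j _ => sq_nonneg _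
  have hPT : ∀ m, Pp a m ≤ T := fun m => hfin _
  have hcard : ∀ m : ℕ, (Finset.Ioc (2^m) (2^(m+1))).card = 2^m := by
    intro m; rw [Nat.card_Ioc]
    have : 2^(m+1) = 2^m * 2 := pow_succ 2 m
    omega
  -- Cauchy-Schwarz on blocks
  have hCS : ∀ m, Dd a m ^ 2 ≤ (2:ℝ)^m * Pp a m := by
    intro m
    have h := sq_sum_le_card_mul_sum_sq (s := Finset.Ioc (2^m) (2^(m+1))) (f := a)
    rw [hcard m] at h
    have : ((2^m : ℕ) : ℝ) = (2:ℝ)^m := by push_cast; ring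
    rw [this] at h
    exact h
  have hDT : ∀ m, Dd a m ≤ r^m * Real.sqrt T := by
    intro m
    have h1 : Dd a m ^ 2 ≤ (2:ℝ)^m * T :=
      le_trans (hCS m) (mul_le_mul_of_nonneg_left (hPT m) (by positivity))
    have h2' : (r^m * Real.sqrt T)^2 = (2:ℝ)^m * T := by
      rw [mul_pow, Real.sq_sqrt hT0, ← pow_mul, mul_comm m 2, pow_mul, hr2]
    nlinarith [hD0 m, mul_nonneg (pow_nonneg hr0.le m) (Real.sqrt_nonneg T)]
  -- telescoping for S
  have htel : ∀ m, M ≤ m → S (2^(m+1)) = S (2^M) + ∑ j ∈ Finset.Icc M m, Dd a j := by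
    intro m hm
    obtain ⟨d, rfl⟩ := Nat.exists_eq_add_of_le hm
    have e1 : ∑ j ∈ Finset.Icc M (M+d), Dd a j
        = ∑ n ∈ Finset.Ioc (2^M) (2^(M+d+1)), a n := sum_dyadic_blocks a M d
    have e2 := Finset.sum_Ioc_consecutive a (Nat.zero_le (2^M))
      (Nat.pow_le_pow_right (by norm_num) (by omega : M ≤ M + d + 1))
    rw [hS, hS, e1, ← e2]
  -- telescoping bound for P
  have hPsum : ∀ K, ∑ m ∈ Finset.Icc M K, Pp a m ≤ T := by
    intro K
    rcases le_or_gt M K with h | h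
    · obtain ⟨d, rfl⟩ := Nat.exists_eq_add_of_le h
      have e1 : ∑ j ∈ Finset.Icc M (M+d), Pp a j
          = ∑ n ∈ Finset.Ioc (2^M) (2^(M+d+1)), a n ^ 2 :=
        sum_dyadic_blocks (fun n => a n ^ 2) M d
      rw [e1]; exact hfin _
    · rw [Finset.Icc_eq_empty (by omega), Finset.sum_empty]; exact hT0
  -- positivity of S at tops of blocks
  have hSpos : ∀ n, N ≤ n → 0 < S n := by
    intro n hn
    have h1 : 0 < a n * S n := lt_of_lt_of_le (mul_pos hε (ht0 n)) (hmain n hn)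
    nlinarith [ha n, hSnonneg n]
  -- key per-block inequality
  have hkey : ∀ m, M ≤ m → ε * t (2^(m+1))
      ≤ q^m * (Real.sqrt T * S (2^M))
        + ∑ j ∈ Finset.Icc M m, q^(m-j) * ((Pp a j + Pp a m) / 2) := by
    intro m hm
    have hn0 : N ≤ 2^m + 1 := by
      have : 2^M ≤ 2^m := Nat.pow_le_pow_right (by norm_num) hm
      omega
    have hStop : 0 < S (2^(m+1)) := by
      refine lt_of_lt_of_le (hSpos (2^m + 1) hn0) (hSmono ?_)
      have h1 : 2^(m+1) = 2^m * 2 := pow_succ 2 m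
      have hone : 1 ≤ 2^m := Nat.one_le_two_pow
      omega
    have hp2 : (0:ℝ) < (2:ℝ)^m := by positivity
    -- lower bound for a n on the block
    have nbound : ∀ n ∈ Finset.Ioc (2^m) (2^(m+1)),
        ε * t (2^(m+1)) / S (2^(m+1)) ≤ a n := by
      intro n hn
      rw [Finset.mem_Ioc] at hn
      have hNn : N ≤ n := by
        have : 2^M ≤ 2^m := Nat.pow_le_pow_right (by norm_num) hm
        omega
      have hSn : 0 < S n := hSpos n hNn
      have step1 : ε * t (2^(m+1)) / S (2^(m+1)) ≤ ε * t n / S n :=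
        div_le_div₀ (mul_nonneg hε.le (ht0 n).le)
          (mul_le_mul_of_nonneg_left (tanti hn.2) hε.le) hSn (hSmono hn.2)
      have step2 : ε * t n / S n ≤ a n := (div_le_iff₀ hSn).mpr (hmain n hNn)
      linarith
    have hsum : (2:ℝ)^m * (ε * t (2^(m+1)) / S (2^(m+1))) ≤ Dd a m := by
      calc (2:ℝ)^m * (ε * t (2^(m+1)) / S (2^(m+1)))
          = ∑ _n ∈ Finset.Ioc (2^m) (2^(m+1)), ε * t (2^(m+1)) / S (2^(m+1)) := by
            rw [Finset.sum_const, hcard, nsmul_eq_mul]; push_cast; ring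
        _ ≤ Dd a m := Finset.sum_le_sum nbound
    have hF1 : ε * t (2^(m+1)) ≤ Dd a m * S (2^(m+1)) / 2^m := by
      rw [le_div_iff₀ hp2]
      calc ε * t (2^(m+1)) * 2^m
          = (2:ℝ)^m * (ε * t (2^(m+1)) / S (2^(m+1))) * S (2^(m+1)) := by
            field_simp
        _ ≤ Dd a m * S (2^(m+1)) :=
            mul_le_mul_of_nonneg_right hsum hStop.le
    have hsplit : Dd a m * S (2^(m+1)) / 2^m
        = Dd a m * S (2^M) / 2^m
          + ∑ j ∈ Finset.Icc M m, Dd a m * Dd a j / 2^m := by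
      rw [htel m hm, mul_add, add_div, Finset.mul_sum, Finset.sum_div]
    have piece1 : Dd a m * S (2^M) / 2^m ≤ q^m * (Real.sqrt T * S (2^M)) := by
      have h1 : Dd a m * S (2^M) ≤ r^m * Real.sqrt T * S (2^M) :=
        mul_le_mul_of_nonneg_right (hDT m) (hSnonneg _)
      rw [div_le_iff₀ hp2]
      have h2' : q^m * (Real.sqrt T * S (2^M)) * 2^m = r^m * Real.sqrt T * S (2^M) := by
        rw [hpow m]; ring
      rw [h2']
      exact h1
    have piece2 : ∀ j ∈ Finset.Icc M m, Dd a m * Dd a j / 2^m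
        ≤ q^(m-j) * ((Pp a j + Pp a m) / 2) := by
      intro j hj
      rw [Finset.mem_Icc] at hj
      obtain ⟨k, hk⟩ := Nat.exists_eq_add_of_le hj.2
      have hmj : m - j = k := by omega
      have h2m : (2:ℝ)^m = 2^j * 2^k := by rw [hk, pow_add]
      have hxk : (0:ℝ) < r^k := pow_pos hr0 k
      have am := two_mul_le (x := r^k) hxk (u := Dd a j) (v := Dd a m)
      have s1 : r^k * Dd a j ^ 2 ≤ r^k * ((2:ℝ)^j * Pp a j) :=
        mul_le_mul_of_nonneg_left (hCS j) hxk.le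
      have s2 : (r^k)⁻¹ * Dd a m ^ 2 ≤ q^k * ((2:ℝ)^m * Pp a m) := by
        rw [hqk k]
        exact mul_le_mul_of_nonneg_left (hCS m) (pow_nonneg hq0.le k)
      have s3 : r^k * ((2:ℝ)^j * Pp a j) = q^k * (2:ℝ)^m * Pp a j := by
        rw [h2m, hpow k]; ring
      rw [hmj, div_le_iff₀ hp2]
      have hq2m : q^k * ((2:ℝ)^m * Pp a m) = q^k * (2:ℝ)^m * Pp a m := by ring
      nlinarith [hP0 j, hP0 m]
    calc ε * t (2^(m+1)) ≤ Dd a m * S (2^(m+1)) / 2^m := hF1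
      _ = Dd a m * S (2^M) / 2^m
          + ∑ j ∈ Finset.Icc M m, Dd a m * Dd a j / 2^m := hsplit
      _ ≤ q^m * (Real.sqrt T * S (2^M))
          + ∑ j ∈ Finset.Icc M m, q^(m-j) * ((Pp a j + Pp a m) / 2) :=
        add_le_add piece1 (Finset.sum_le_sum piece2)
  -- global summation over blocks
  set A := Real.sqrt T * S (2^M) with hAdef
  have hA0 : 0 ≤ A := mul_nonneg (Real.sqrt_nonneg T) (hSnonneg _)
  set Cb := cq * A + cq * T with hCbdef
  have hsum_t : ∀ K, ∑ m ∈ Finset.Icc M K, t (2^(m+1)) ≤ Cb / ε := by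
    intro K
    rw [le_div_iff₀ hε]
    have h1 : ∑ m ∈ Finset.Icc M K, ε * t (2^(m+1))
        ≤ ∑ m ∈ Finset.Icc M K,
            (q^m * A + ∑ j ∈ Finset.Icc M m, q^(m-j) * ((Pp a j + Pp a m)/2)) := by
      apply Finset.sum_le_sum
      intro m hm
      exact hkey m (Finset.mem_Icc.mp hm).1
    have hB1 : ∑ m ∈ Finset.Icc M K, q^m * A ≤ cq * A := by
      rw [← Finset.sum_mul]
      exact mul_le_mul_of_nonneg_right
        (sum_pow_le_geom hq0.le hq1 _ id (fun x _ y _ h => h)) hA0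
    have hswap : ∑ m ∈ Finset.Icc M K, ∑ j ∈ Finset.Icc M m, q^(m-j) * Pp a j
        = ∑ j ∈ Finset.Icc M K, ∑ m ∈ Finset.Icc j K, q^(m-j) * Pp a j :=
      Finset.sum_comm' (fun x y => by simp only [Finset.mem_Icc]; omega)
    have hB2a : ∑ m ∈ Finset.Icc M K, ∑ j ∈ Finset.Icc M m, q^(m-j) * Pp a j ≤ cq * T := by
      rw [hswap]
      calc ∑ j ∈ Finset.Icc M K, ∑ m ∈ Finset.Icc j K, q^(m-j) * Pp a j
          = ∑ j ∈ Finset.Icc M K, (∑ m ∈ Finset.Icc j K, q^(m-j)) * Pp a j := by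
            refine Finset.sum_congr rfl fun j _ => ?_
            rw [Finset.sum_mul]
        _ ≤ ∑ j ∈ Finset.Icc M K, cq * Pp a j := by
            apply Finset.sum_le_sum
            intro j hj
            rw [Finset.mem_Icc] at hj
            refine mul_le_mul_of_nonneg_right
              (sum_pow_le_geom hq0.le hq1 _ (fun m => m - j) ?_) (hP0 j)
            intro x hx y hy h
            rw [Finset.mem_Icc] at hx hy
            have h' : x - j = y - j := h
            omega
        _ = cq * ∑ j ∈ Finset.Icc M K, Pp a j := by rw [Finset.mul_sum]
        _ ≤ cq * T := mul_le_mul_of_nonneg_left (hPsum K) hcq0.le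
    have hB2b : ∑ m ∈ Finset.Icc M K, (∑ j ∈ Finset.Icc M m, q^(m-j)) * Pp a m ≤ cq * T := by
      calc ∑ m ∈ Finset.Icc M K, (∑ j ∈ Finset.Icc M m, q^(m-j)) * Pp a m
          ≤ ∑ m ∈ Finset.Icc M K, cq * Pp a m := by
            apply Finset.sum_le_sum
            intro m hm
            rw [Finset.mem_Icc] at hm
            refine mul_le_mul_of_nonneg_right
              (sum_pow_le_geom hq0.le hq1 _ (fun j => m - j) ?_) (hP0 m)
            intro x hx y hy h
            rw [Finset.mem_Icc] at hx hy
            have h' : m - x = m - y := h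
            omega
        _ = cq * ∑ m ∈ Finset.Icc M K, Pp a m := by rw [Finset.mul_sum]
        _ ≤ cq * T := mul_le_mul_of_nonneg_left (hPsum K) hcq0.le
    have hB2 : ∑ m ∈ Finset.Icc M K,
        (∑ j ∈ Finset.Icc M m, q^(m-j) * ((Pp a j + Pp a m)/2)) ≤ cq * T := by
      have e : ∀ m ∈ Finset.Icc M K,
          ∑ j ∈ Finset.Icc M m, q^(m-j) * ((Pp a j + Pp a m)/2)
          = (1/2) * (∑ j ∈ Finset.Icc M m, q^(m-j) * Pp a j)
            + (1/2) * ((∑ j ∈ Finset.Icc M m, q^(m-j)) * Pp a m) := by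
        intro m _
        rw [Finset.sum_mul, Finset.mul_sum, Finset.mul_sum, ← Finset.sum_add_distrib]
        refine Finset.sum_congr rfl fun j _ => by ring
      rw [Finset.sum_congr rfl e, Finset.sum_add_distrib, ← Finset.mul_sum, ← Finset.mul_sum]
      linarith [hB2a, hB2b]
    calc (∑ m ∈ Finset.Icc M K, t (2^(m+1))) * ε
        = ∑ m ∈ Finset.Icc M K, ε * t (2^(m+1)) := by
          rw [Finset.sum_mul]
          exact Finset.sum_congr rfl fun m _ => mul_comm _ _
      _ ≤ cq * A + cq * T := by
          refine le_trans h1 ?_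
          rw [Finset.sum_add_distrib]
          exact add_le_add hB1 hB2
      _ = Cb := rfl
  have hCb0 : 0 ≤ Cb / ε :=
    div_nonneg (add_nonneg (mul_nonneg hcq0.le hA0) (mul_nonneg hcq0.le hT0)) hε.le
  -- per block bound for t k / k
  have hblock : ∀ nn : ℕ, ∑ k ∈ Finset.Ioc (2^nn) (2^(nn+1)), t k / (k:ℝ) ≤ t (2^nn) := by
    intro nn
    have hp : (0:ℝ) < (2:ℝ)^nn := by positivity
    have hb : ∀ k ∈ Finset.Ioc (2^nn) (2^(nn+1)), t k / (k:ℝ) ≤ t (2^nn) / (2:ℝ)^nn := by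
      intro k hk
      rw [Finset.mem_Ioc] at hk
      have hc : (2:ℝ)^nn = ((2^nn : ℕ) : ℝ) := by push_cast; ring
      have hk1 : (2:ℝ)^nn ≤ (k:ℝ) := by
        rw [hc]
        exact_mod_cast hk.1.le
      exact div_le_div₀ (ht0 _).le (tanti hk.1.le) hp hk1
    calc ∑ k ∈ Finset.Ioc (2^nn) (2^(nn+1)), t k / (k:ℝ)
        ≤ ∑ _k ∈ Finset.Ioc (2^nn) (2^(nn+1)), t (2^nn) / (2:ℝ)^nn :=
          Finset.sum_le_sum hb
      _ = t (2^nn) := by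
          rw [Finset.sum_const, hcard, nsmul_eq_mul]
          push_cast
          field_simp
  -- partial sums of t k / k grow by at most the block bounds
  have hG : ∀ d : ℕ, ∑ k ∈ Finset.Ioc 0 (2^(M+d+1)), t k / (k:ℝ)
      ≤ (∑ k ∈ Finset.Ioc 0 (2^(M+1)), t k / (k:ℝ))
        + ∑ m ∈ Finset.Ico M (M+d), t (2^(m+1)) := by
    intro d
    induction d with
    | zero =>
      simp
    | succ d ih =>
      rw [← add_assoc]
      have e := Finset.sum_Ioc_consecutive (fun k => t k / (k:ℝ))
        (Nat.zero_le (2^(M+d+1)))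
        (Nat.pow_le_pow_right (by norm_num) (by omega : M+d+1 ≤ M+d+1+1))
      rw [← e, Finset.sum_Ico_succ_top (by omega : M ≤ M + d)]
      have hbl := hblock (M+d+1)
      linarith
  -- conclude
  have hf0 : ∀ k : ℕ, 0 ≤ t k / (k:ℝ) := fun k => div_nonneg (ht0 k).le (Nat.cast_nonneg k)
  apply summable_of_sum_range_le
    (c := (∑ k ∈ Finset.Ioc 0 (2^(M+1)), t k / (k:ℝ)) + Cb / ε) hf0
  intro n
  have hsub : Finset.range n ⊆ insert 0 (Finset.Ioc 0 (2^(M+n+1))) := by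
    intro k hk
    rw [Finset.mem_range] at hk
    rcases Nat.eq_zero_or_pos k with h | h
    · simp [h]
    · apply Finset.mem_insert_of_mem
      rw [Finset.mem_Ioc]
      refine ⟨h, ?_⟩
      have h1 : n < 2^n := Nat.lt_two_pow_self (n := n)
      have h2 : 2^n ≤ 2^(M+n+1) := Nat.pow_le_pow_right (by norm_num) (by omega)
      omega
  calc ∑ k ∈ Finset.range n, t k / (k:ℝ)
      ≤ ∑ k ∈ insert 0 (Finset.Ioc 0 (2^(M+n+1))), t k / (k:ℝ) :=
        Finset.sum_le_sum_of_subset_of_nonneg hsub (fun k _ _ => hf0 k)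
    _ = ∑ k ∈ Finset.Ioc 0 (2^(M+n+1)), t k / (k:ℝ) := by
        rw [Finset.sum_insert (by simp)]
        norm_num
    _ ≤ (∑ k ∈ Finset.Ioc 0 (2^(M+1)), t k / (k:ℝ))
        + ∑ m ∈ Finset.Ico M (M+n), t (2^(m+1)) := hG n
    _ ≤ _ := by
        have h1 : ∑ m ∈ Finset.Ico M (M+n), t (2^(m+1))
            ≤ ∑ m ∈ Finset.Icc M (M+n), t (2^(m+1)) :=
          Finset.sum_le_sum_of_subset_of_nonneg Finset.Ico_subset_Icc_self
            (fun m _ _ => (ht0 _).le)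
        have h2 := hsum_t (M+n)
        linarith

theorem stmt11 (t : ℕ → ℝ) (ht : ∀ k, 1 ≤ k → t k ∈ Set.Ioc (0 : ℝ) 1)
    (hmono : ∀ k, t (k + 1) ≤ t k)
    (hdiv : ¬ Summable (fun k => t k / k))
    (a : ℕ → ℝ) (ha : ∀ j, 0 ≤ a j) (h2 : Summable (fun j => a j ^ 2)) :
    Filter.atTop.liminf (fun n => a n / t n * ∑ j ∈ Finset.Icc 1 n, a j) = 0 := by
  have ht1pos : 0 < t 1 := (ht 1 le_rfl).1
  have ht0 : ∀ k, 0 < t k := by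
    intro k
    cases k with
    | zero => exact lt_of_lt_of_le ht1pos (hmono 0)
    | succ n => exact (ht (n+1) (Nat.succ_le_succ (Nat.zero_le n))).1
  have tanti : Antitone t := antitone_nat_of_succ_le hmono
  have hIcc : ∀ n : ℕ, Finset.Icc 1 n = Finset.Ioc 0 n := by
    intro n; ext x; simp only [Finset.mem_Icc, Finset.mem_Ioc]; omega
  set S : ℕ → ℝ := fun n => ∑ j ∈ Finset.Ioc 0 n, a j with hSdef
  have hgoal_fun : (fun n => a n / t n * ∑ j ∈ Finset.Icc 1 n, a j)
      = fun n => a n / t n * S n := by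
    funext n; rw [hIcc]
  rw [hgoal_fun]
  have hSnonneg : ∀ n, 0 ≤ S n := fun n => Finset.sum_nonneg fun j _ => ha j
  rw [Filter.liminf_eq]
  have hset : {b : ℝ | ∀ᶠ n in Filter.atTop, b ≤ a n / t n * S n} = Set.Iic 0 := by
    ext b
    simp only [Set.mem_setOf_eq, Set.mem_Iic]
    constructor
    · intro hb
      by_contra hb0
      push_neg at hb0
      rw [Filter.eventually_atTop] at hb
      obtain ⟨N, hN⟩ := hb
      refine absurd (main_contra t ht0 tanti a ha h2 S (fun n => rfl) b hb0 N ?_) hdiv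
      intro n hn
      have h := hN n hn
      rw [div_mul_eq_mul_div] at h
      exact (le_div_iff₀ (ht0 n)).mp h
    · intro hb
      filter_upwards [Filter.eventually_ge_atTop 1] with n _
      have h0 : 0 ≤ a n / t n * S n :=
        mul_nonneg (div_nonneg (ha n) (ht0 n).le) (hSnonneg n)
      linarith
  rw [hset]
  exact csSup_Iic
end

section
/- For a Banach space X with modulus of smoothness ρ(u) ≤ γu^q, 1 < q ≤ 2, if f_{n-1} ≠ 0, φ_n has norm 1, F_{f_{n-1}} is a norming functional of f_{n-1}, and F_{f_{n-1}}(φ_n) ≥ t_n r where r ≥ 0, then for any c_n > 0: ‖f_{n-1} − c_n φ_n‖ ≤ ‖f_{n-1}‖(1 + 2ρ(c_n/‖f_{n-1}‖)) − c_n t_n r. -/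
/-- The modulus of smoothness of a normed space `X`. -/
noncomputable def modulusOfSmoothness (X : Type*) [NormedAddCommGroup X]
    [NormedSpace ℝ X] (u : ℝ) : ℝ :=
  sSup {r : ℝ | ∃ x y : X, ‖x‖ = 1 ∧ ‖y‖ = 1 ∧
    r = (‖x + u • y‖ + ‖x - u • y‖) / 2 - 1}

theorem stmt12 {X : Type*} [NormedAddCommGroup X] [NormedSpace ℝ X]
    [CompleteSpace X] (γ q : ℝ) (hq1 : 1 < q) (hq2 : q ≤ 2)
    (hρ : ∀ u : ℝ, 0 ≤ u → modulusOfSmoothness X u ≤ γ * u ^ q)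
    (f φ : X) (hf : f ≠ 0) (hφ : ‖φ‖ = 1)
    (F : X →L[ℝ] ℝ) (hFnorm : ‖F‖ = 1) (hFf : F f = ‖f‖)
    (t r : ℝ) (hr : 0 ≤ r) (hFφ : t * r ≤ F φ)
    (c : ℝ) (hc : 0 < c) :
    ‖f - c • φ‖ ≤ ‖f‖ * (1 + 2 * modulusOfSmoothness X (c / ‖f‖)) - c * t * r := by
  have hfn : (0:ℝ) < ‖f‖ := norm_pos_iff.mpr hf
  set u := c / ‖f‖ with hu
  -- BddAbove of the defining set
  have hbdd : BddAbove {s : ℝ | ∃ x y : X, ‖x‖ = 1 ∧ ‖y‖ = 1 ∧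
      s = (‖x + u • y‖ + ‖x - u • y‖) / 2 - 1} := by
    refine ⟨|u|, ?_⟩
    rintro s ⟨x, y, hx, hy, rfl⟩
    have h1 : ‖x + u • y‖ ≤ 1 + |u| := by
      calc ‖x + u • y‖ ≤ ‖x‖ + ‖u • y‖ := norm_add_le _ _
        _ = 1 + |u| := by rw [hx, norm_smul, hy, Real.norm_eq_abs, mul_one]
    have h2 : ‖x - u • y‖ ≤ 1 + |u| := by
      calc ‖x - u • y‖ ≤ ‖x‖ + ‖u • y‖ := norm_sub_le _ _
        _ = 1 + |u| := by rw [hx, norm_smul, hy, Real.norm_eq_abs, mul_one]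
    linarith
  -- membership with x = f/‖f‖, y = φ
  have hx1 : ‖(‖f‖⁻¹ : ℝ) • f‖ = 1 := by
    rw [norm_smul, Real.norm_eq_abs, abs_of_pos (inv_pos.mpr hfn)]
    field_simp
  have key1 : ‖(‖f‖⁻¹ : ℝ) • f + u • φ‖ = ‖f + c • φ‖ / ‖f‖ := by
    have : (‖f‖⁻¹ : ℝ) • f + u • φ = (‖f‖⁻¹ : ℝ) • (f + c • φ) := by
      rw [smul_add, smul_smul, hu]
      congr 2
      field_simp
    rw [this, norm_smul, Real.norm_eq_abs, abs_of_pos (inv_pos.mpr hfn)]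
    ring
  have key2 : ‖(‖f‖⁻¹ : ℝ) • f - u • φ‖ = ‖f - c • φ‖ / ‖f‖ := by
    have : (‖f‖⁻¹ : ℝ) • f - u • φ = (‖f‖⁻¹ : ℝ) • (f - c • φ) := by
      rw [smul_sub, smul_smul, hu]
      congr 2
      field_simp
    rw [this, norm_smul, Real.norm_eq_abs, abs_of_pos (inv_pos.mpr hfn)]
    ring
  have hmem : (‖f + c • φ‖ / ‖f‖ + ‖f - c • φ‖ / ‖f‖) / 2 - 1 ≤
      modulusOfSmoothness X u := by
    apply le_csSup hbdd
    exact ⟨(‖f‖⁻¹ : ℝ) • f, φ, hx1, hφ, by rw [key1, key2]⟩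
  -- lower bound for ‖f + cφ‖
  have hlow : ‖f‖ + c * (t * r) ≤ ‖f + c • φ‖ := by
    have hF : F (f + c • φ) ≤ ‖f + c • φ‖ := by
      calc F (f + c • φ) ≤ ‖F (f + c • φ)‖ := le_abs_self _
        _ ≤ ‖F‖ * ‖f + c • φ‖ := F.le_opNorm _
        _ = ‖f + c • φ‖ := by rw [hFnorm, one_mul]
    have : F (f + c • φ) = ‖f‖ + c * F φ := by
      rw [map_add, map_smul, hFf]; rfl
    nlinarith
  rw [← add_div] at hmem
  have h3 : ‖f + c • φ‖ + ‖f - c • φ‖ ≤ 2 * (1 + modulusOfSmoothness X u) * ‖f‖ :=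
    (div_le_iff₀ hfn).mp (by linarith)
  nlinarith [h3, hlow]
end

section
/- Let {r_m}_{m≥0}, {B_m}_{m≥0}, {c_m}_{m≥1}, {t_m}_{m≥1} be sequences of positive reals with {t_m} ⊂ (0,1] nonincreasing, b ∈ (0,1), satisfying r_m ≤ r_{m-1}(1 − t_m(1−b)c_m/B_{m-1}) and B_m = B_{m-1}(1 + c_m/B_{m-1}), with t_m(1−b)c_m/B_{m-1} < 1. Then r_m B_m^{t_m(1−b)} ≤ r_{m-1} B_{m-1}^{t_m(1−b)} for each m, and consequently r_m B_m^{t_m(1−b)} ≤ r₀ B₀^{t_m(1−b)}. -/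
theorem stmt13 (r B c t : ℕ → ℝ) (b : ℝ) (hb : b ∈ Set.Ioo (0 : ℝ) 1)
    (hr : ∀ m, 0 < r m) (hB : ∀ m, 0 < B m) (hc : ∀ m, 0 < c m)
    (ht : ∀ m, t m ∈ Set.Ioc (0 : ℝ) 1) (htmono : ∀ m, t (m + 1) ≤ t m)
    (hrrec : ∀ m, r (m + 1) ≤ r m * (1 - t (m + 1) * (1 - b) * c (m + 1) / B m))
    (hBrec : ∀ m, B (m + 1) = B m * (1 + c (m + 1) / B m))
    (hsmall : ∀ m, t (m + 1) * (1 - b) * c (m + 1) / B m < 1) :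
    (∀ m, r (m + 1) * B (m + 1) ^ (t (m + 1) * (1 - b)) ≤
        r m * B m ^ (t (m + 1) * (1 - b)))
    ∧ (∀ m, r m * B m ^ (t m * (1 - b)) ≤ r 0 * B 0 ^ (t m * (1 - b))) := by
  obtain ⟨hb0, hb1⟩ := hb
  have h1b : 0 < 1 - b := by linarith
  -- general step with arbitrary admissible exponent α ≤ t (m+1) * (1-b)
  have key : ∀ m, ∀ α : ℝ, 0 ≤ α → α ≤ t (m + 1) * (1 - b) →
      r (m + 1) * B (m + 1) ^ α ≤ r m * B m ^ α := by
    intro m α hα0 hαle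
    have hα1 : α ≤ 1 := by
      have := (ht (m + 1)).2
      have := (ht (m + 1)).1
      nlinarith
    have hx : (0 : ℝ) < c (m + 1) / B m := div_pos (hc _) (hB _)
    have hBm := hB m
    have hB1 : B (m + 1) ^ α = B m ^ α * (1 + c (m + 1) / B m) ^ α := by
      rw [hBrec m, Real.mul_rpow hBm.le (by linarith)]
    have hBern : (1 + c (m + 1) / B m) ^ α ≤ 1 + α * (c (m + 1) / B m) :=
      rpow_one_add_le_one_add_mul_self (by linarith) hα0 hα1
    have hBpow : 0 < B m ^ α := Real.rpow_pos_of_pos hBm α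
    have hstep : r (m + 1) * B (m + 1) ^ α ≤
        r m * (1 - t (m + 1) * (1 - b) * c (m + 1) / B m) *
          (B m ^ α * (1 + α * (c (m + 1) / B m))) := by
      rw [hB1]
      have h2 : 0 ≤ 1 - t (m + 1) * (1 - b) * c (m + 1) / B m :=
        by linarith [hsmall m]
      have h3 : 0 ≤ (1 + c (m + 1) / B m) ^ α :=
        Real.rpow_nonneg (by linarith) α
      have h4 := hrrec m
      have h5 : 0 < r (m + 1) := hr (m + 1)
      nlinarith [mul_le_mul h4 (mul_le_mul_of_nonneg_left hBern hBpow.le)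
        (by positivity) (by nlinarith [hr m])]
    refine hstep.trans ?_
    have hrm := hr m
    have hts : α * (c (m + 1) / B m) ≤ t (m + 1) * (1 - b) * c (m + 1) / B m := by
      rw [mul_div_assoc]
      exact mul_le_mul_of_nonneg_right hαle hx.le
    have hX : 0 ≤ α * (c (m + 1) / B m) := mul_nonneg hα0 hx.le
    have h6 : (1 - t (m + 1) * (1 - b) * c (m + 1) / B m) * (1 + α * (c (m + 1) / B m)) ≤ 1 := by
      nlinarith [hts, hX, mul_nonneg (hX.trans hts) hX]
    nlinarith [mul_le_mul_of_nonneg_left h6 (mul_nonneg hrm.le hBpow.le)]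
  have part1 : ∀ m, r (m + 1) * B (m + 1) ^ (t (m + 1) * (1 - b)) ≤
      r m * B m ^ (t (m + 1) * (1 - b)) := fun m =>
    key m _ (by nlinarith [(ht (m+1)).1]) le_rfl
  refine ⟨part1, ?_⟩
  have hBmono : ∀ m, B 0 ≤ B m := by
    intro m
    induction m with
    | zero => exact le_rfl
    | succ n ih =>
      rw [hBrec n]
      nlinarith [hB n, div_pos (hc (n+1)) (hB n)]
  intro m
  induction m with
  | zero => exact le_rfl
  | succ n ih =>
    have hα0 : 0 ≤ t (n + 1) * (1 - b) := by nlinarith [(ht (n+1)).1]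
    have step := key n _ hα0 le_rfl
    refine step.trans ?_
    -- from ih : r n * B n ^ (t n * (1-b)) ≤ r 0 * B 0 ^ (t n * (1-b))
    -- deduce r n * B n ^ (t (n+1)*(1-b)) ≤ r 0 * B 0 ^ (t (n+1)*(1-b))
    have hαle : t (n + 1) * (1 - b) ≤ t n * (1 - b) :=
      mul_le_mul_of_nonneg_right (htmono n) h1b.le
    have hB0 := hB 0
    have hBn := hB n
    have hBle := hBmono n
    -- r n ≤ r 0 * (B 0 / B n) ^ (t n * (1-b))
    have hrn : r n ≤ r 0 * (B 0 / B n) ^ (t n * (1 - b)) := by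
      rw [Real.div_rpow hB0.le hBn.le, ← mul_div_assoc,
        le_div_iff₀ (Real.rpow_pos_of_pos hBn _)]
      exact ih
    have hratio : (B 0 / B n) ^ (t n * (1 - b)) ≤ (B 0 / B n) ^ (t (n + 1) * (1 - b)) := by
      apply Real.rpow_le_rpow_of_exponent_ge (div_pos hB0 hBn)
        (div_le_one_of_le₀ hBle hBn.le) hαle
    have hrn2 : r n ≤ r 0 * (B 0 / B n) ^ (t (n + 1) * (1 - b)) :=
      hrn.trans (mul_le_mul_of_nonneg_left hratio (hr 0).le)
    calc r n * B n ^ (t (n + 1) * (1 - b))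
        ≤ (r 0 * (B 0 / B n) ^ (t (n + 1) * (1 - b))) * B n ^ (t (n + 1) * (1 - b)) :=
          mul_le_mul_of_nonneg_right hrn2 (Real.rpow_pos_of_pos hBn _).le
      _ = r 0 * B 0 ^ (t (n + 1) * (1 - b)) := by
          rw [Real.div_rpow hB0.le hBn.le]
          field_simp
end

section
/- Let {a_m} and {B_m} be positive real sequences such that (a_m/B_m)^p ≤ (a_{m-1}/B_{m-1})^p (1 − c t_m^p (a_{m-1}/B_{m-1})^p) for all m ≥ 1, with (a_0/B_0)^p ≤ 1, c > 0, t_m ∈ (0,1], p > 1. Then (a_m/B_m)^p ≤ (1 + c ∑_{k=1}^m t_k^p)^{-1}. -/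
lemma aux19 (x y s T : ℝ) (hx : 0 < x) (hy : 0 < y) (hs : 0 ≤ s) (hT : 0 < T)
    (h : x ≤ y * (1 - s * y)) (hyT : y ≤ T⁻¹) : x ≤ (T + s)⁻¹ := by
  have h1 : 0 < 1 - s * y := by nlinarith
  have h2 : y * T ≤ 1 := by
    calc y * T ≤ T⁻¹ * T := mul_le_mul_of_nonneg_right hyT hT.le
    _ = 1 := inv_mul_cancel₀ hT.ne'
  rw [← one_div, le_div_iff₀ (by positivity)]
  nlinarith [mul_nonneg (by nlinarith : (0:ℝ) ≤ 1 - y * T) h1.le, sq_nonneg (s * y)]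

theorem stmt19 (a B t : ℕ → ℝ) (c p : ℝ) (hc : 0 < c) (hp : 1 < p)
    (ha : ∀ m, 0 < a m) (hB : ∀ m, 0 < B m) (ht : ∀ m, t m ∈ Set.Ioc (0 : ℝ) 1)
    (h0 : (a 0 / B 0) ^ p ≤ 1)
    (hrec : ∀ m, (a (m + 1) / B (m + 1)) ^ p ≤
      (a m / B m) ^ p * (1 - c * t (m + 1) ^ p * (a m / B m) ^ p)) :
    ∀ m, (a m / B m) ^ p ≤ (1 + c * ∑ k ∈ Finset.Icc 1 m, t k ^ p)⁻¹ := by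
  have hx : ∀ m, 0 < (a m / B m) ^ p := fun m =>
    Real.rpow_pos_of_pos (div_pos (ha m) (hB m)) p
  have hts : ∀ m, 0 < t m ^ p := fun m => Real.rpow_pos_of_pos (ht m).1 p
  have hsum : ∀ m, 0 ≤ ∑ k ∈ Finset.Icc 1 m, t k ^ p := fun m =>
    Finset.sum_nonneg fun k _ => (hts k).le
  intro m
  induction m with
  | zero => simpa using h0
  | succ n ih =>
    rw [Finset.sum_Icc_succ_top (by omega : 1 ≤ n + 1)]
    have key := aux19 ((a (n+1) / B (n+1)) ^ p) ((a n / B n) ^ p)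
      (c * t (n+1) ^ p) (1 + c * ∑ k ∈ Finset.Icc 1 n, t k ^ p)
      (hx _) (hx _) (mul_pos hc (hts _)).le (by nlinarith [hsum n]) (hrec n) ih
    calc (a (n+1) / B (n+1)) ^ p
        ≤ ((1 + c * ∑ k ∈ Finset.Icc 1 n, t k ^ p) + c * t (n+1) ^ p)⁻¹ := key
      _ = (1 + c * ((∑ k ∈ Finset.Icc 1 n, t k ^ p) + t (n+1) ^ p))⁻¹ := by congr 1; ring
end
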